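/- Let Ω ⊆ ℝⁿ be open, let E₁, ..., E_m be smooth pointwise-orthonormal vector fields on Ω spanning a distribution D, and suppose S : Ω → ℝ is C¹ with Σᵢ (Eᵢ S)² = 1 on Ω. If c : [0,T] → Ω is a horizontal integral curve of the horizontal gradient Σᵢ (Eᵢ S) Eᵢ, and c̃ : [0,T̃] → Ω is any other horizontal curve in Ω with the same endpoints, parameterized by arclength, then T ≤ T̃, i.e., the length of c is at most the length of c̃. -/

import Mathlib

open scoped BigOperators

/-- Calibration/Hamilton–Jacobi argument. If `S` is `C¹` on an open
set `Ω ⊆ ℝⁿ` with orthonormal horizontal frame `E i` and `Σᵢ (Eᵢ S)² = 1`, then an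
integral curve `c` of the horizontal gradient is at least as short as any other
horizontal curve `c̃` in `Ω` (parameterized by arclength) with the same endpoints:
`T ≤ T̃`. -/
theorem stmt5 (n m : ℕ) (Ω : Set (EuclideanSpace ℝ (Fin n))) (hΩ : IsOpen Ω)
    (E : Fin m → EuclideanSpace ℝ (Fin n) → EuclideanSpace ℝ (Fin n))
    (hEsmooth : ∀ i, ContDiffOn ℝ (⊤ : ℕ∞) (E i) Ω)
    (horth : ∀ p ∈ Ω, ∀ i j,
      inner ℝ (E i p) (E j p) = (if i = j then (1:ℝ) else 0))
    (S : EuclideanSpace ℝ (Fin n) → ℝ)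
    (dS : EuclideanSpace ℝ (Fin n) → (EuclideanSpace ℝ (Fin n) →L[ℝ] ℝ))
    (hS : ∀ p ∈ Ω, HasFDerivAt S (dS p) p)
    (heik : ∀ p ∈ Ω, ∑ i, (dS p (E i p))^2 = 1)
    (T T' : ℝ) (hT : 0 ≤ T) (hT' : 0 ≤ T')
    (c : ℝ → EuclideanSpace ℝ (Fin n))
    (hcΩ : ∀ t ∈ Set.Icc 0 T, c t ∈ Ω)
    (hc : ∀ t ∈ Set.Icc 0 T,
      HasDerivAt c (∑ i, (dS (c t) (E i (c t))) • E i (c t)) t)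
    (c' : ℝ → EuclideanSpace ℝ (Fin n)) (u : Fin m → ℝ → ℝ)
    (hc'Ω : ∀ t ∈ Set.Icc 0 T', c' t ∈ Ω)
    (hc' : ∀ t ∈ Set.Icc 0 T',
      HasDerivAt c' (∑ i, (u i t) • E i (c' t)) t)
    (harc : ∀ t ∈ Set.Icc 0 T', ∑ i, (u i t)^2 = 1)
    (h0 : c 0 = c' 0) (h1 : c T = c' T') :
    T ≤ T' := by
  set f : ℝ → ℝ := fun t => S (c t) - t with hf
  -- S ∘ c grows at unit speed: f has derivative 0 on Icc 0 T
  have hfc : ∀ t ∈ Set.Icc (0:ℝ) T, HasDerivWithinAt f 0 (Set.Icc 0 T) t := by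
    intro t ht
    have h := (hS (c t) (hcΩ t ht)).comp_hasDerivAt t (hc t ht)
    have hval : dS (c t) (∑ i, (dS (c t) (E i (c t))) • E i (c t)) = 1 := by
      rw [map_sum]
      simp only [map_smul, smul_eq_mul]
      rw [← heik (c t) (hcΩ t ht)]
      exact Finset.sum_congr rfl fun i _ => (sq (dS (c t) (E i (c t)))).symm
    rw [hval] at h
    have : HasDerivAt f (1 - 1) t := h.sub (hasDerivAt_id t)
    simpa using this.hasDerivWithinAt
  have hTeq : S (c T) - S (c 0) = T := by
    have := Convex.norm_image_sub_le_of_norm_hasDerivWithin_le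
      (C := 0) (f' := fun _ => (0:ℝ)) hfc (fun x _ => by simp) (convex_Icc 0 T)
      (Set.left_mem_Icc.2 hT) (Set.right_mem_Icc.2 hT)
    have h0' : f T = f 0 := by
      have : ‖f T - f 0‖ ≤ 0 := by simpa using this
      have := norm_le_zero_iff.1 this
      linarith [sub_eq_zero.1 this]
    simp only [hf] at h0'
    linarith
  -- derivative of S ∘ c' is bounded by 1
  have hg : ∀ t ∈ Set.Icc (0:ℝ) T',
      HasDerivWithinAt (fun t => S (c' t))
        (∑ i, u i t * dS (c' t) (E i (c' t))) (Set.Icc 0 T') t := by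
    intro t ht
    have h := (hS (c' t) (hc'Ω t ht)).comp_hasDerivAt t (hc' t ht)
    have hval : dS (c' t) (∑ i, (u i t) • E i (c' t))
        = ∑ i, u i t * dS (c' t) (E i (c' t)) := by
      rw [map_sum]; simp [smul_eq_mul]
    rw [hval] at h
    exact h.hasDerivWithinAt
  have hbound : ∀ t ∈ Set.Icc (0:ℝ) T',
      ‖∑ i, u i t * dS (c' t) (E i (c' t))‖ ≤ 1 := by
    intro t ht
    have hCS := Finset.sum_mul_sq_le_sq_mul_sq Finset.univ
      (fun i => u i t) (fun i => dS (c' t) (E i (c' t)))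
    rw [harc t ht, heik (c' t) (hc'Ω t ht), one_mul] at hCS
    have : |∑ i, u i t * dS (c' t) (E i (c' t))| ≤ 1 := by
      nlinarith [sq_abs (∑ i, u i t * dS (c' t) (E i (c' t))),
        abs_nonneg (∑ i, u i t * dS (c' t) (E i (c' t)))]
    simpa using this
  have hT'le : S (c' T') - S (c' 0) ≤ T' := by
    have := Convex.norm_image_sub_le_of_norm_hasDerivWithin_le
      hg hbound (convex_Icc 0 T') (Set.left_mem_Icc.2 hT') (Set.right_mem_Icc.2 hT')
    have h2 : |S (c' T') - S (c' 0)| ≤ |T' - 0| := by simpa using this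
    calc S (c' T') - S (c' 0) ≤ |S (c' T') - S (c' 0)| := le_abs_self _
      _ ≤ |T' - 0| := h2
      _ = T' := by rw [sub_zero, abs_of_nonneg hT']
  rw [← hTeq, h0, h1]
  exact hT'le
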